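/- arXiv:2005.04502 — 4 statements merged into one kernel-verified Lean document; each statement's English description precedes it below -/
import Mathlib

section
/- Let $d \geq 1$, let $\mathbf{a}$ be the unit vector in $\mathbb{R}^d$ in the direction of $(1, 1/\sqrt{2}, \ldots, 1/\sqrt{d})$, and let $\mathbf{w} = (w_1, \ldots, w_d)$ be a vector with $w_1 \geq w_2 \geq \cdots \geq w_d \geq 0$. Then there is an absolute constant $c > 0$ such that $\langle \mathbf{w}, \mathbf{a} \rangle \geq c\, |\mathbf{w}| / \sqrt{\log(d+1)}$. -/
open Finset

/-- For `a` the unit vector in the direction of `(1, 1/√2, …, 1/√d)` and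
`w` with nonincreasing nonnegative coordinates, `⟨w, a⟩ ≥ c |w| / √(log (d+1))`. -/
theorem stmt0 :
    ∃ c : ℝ, 0 < c ∧ ∀ (d : ℕ), 1 ≤ d →
      ∀ w : Fin d → ℝ, (∀ i j : Fin d, i ≤ j → w j ≤ w i) → (∀ i, 0 ≤ w i) →
        let a : Fin d → ℝ := fun j =>
          (1 / Real.sqrt (j.1 + 1)) / Real.sqrt (∑ k : Fin d, 1 / ((k.1 : ℝ) + 1))
        c * Real.sqrt (∑ j, w j ^ 2) / Real.sqrt (Real.log (d + 1)) ≤ ∑ j, w j * a j := by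
  refine ⟨1/2, by norm_num, ?_⟩
  intro d hd w hmono hnn a
  set H : ℝ := ∑ k : Fin d, 1 / ((k.1 : ℝ) + 1) with hH
  set L : ℝ := Real.log (d + 1) with hL
  set S : ℝ := ∑ j : Fin d, w j / Real.sqrt (j.1 + 1) with hS
  set Q : ℝ := ∑ j : Fin d, w j ^ 2 with hQ
  have ha : a = fun j : Fin d => (1 / Real.sqrt (j.1 + 1)) / Real.sqrt H := rfl
  -- basic positivity facts
  have hd1 : (1 : ℝ) ≤ d := by exact_mod_cast hd
  have hL2 : Real.log 2 ≤ L := Real.log_le_log (by norm_num) (by linarith)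
  have hLpos : 0 < L := lt_of_lt_of_le (Real.log_pos (by norm_num)) hL2
  have hone : (1 : ℝ) ≤ 2 * L := by
    have := Real.log_two_gt_d9
    linarith
  have hHpos : 0 < H := by
    apply Finset.sum_pos
    · intro k _
      positivity
    · exact ⟨⟨0, hd⟩, Finset.mem_univ _⟩
  have hSnn : 0 ≤ S := Finset.sum_nonneg fun j _ => div_nonneg (hnn j) (Real.sqrt_nonneg _)
  -- key pointwise bound : √(j+1) * w j ≤ S
  have keyA : ∀ j : Fin d, Real.sqrt (j.1 + 1) * w j ≤ S := by
    intro j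
    have hcard : (Finset.Iic j).card = j.1 + 1 := Fin.card_Iic j
    have h1 : ∑ _k ∈ Finset.Iic j, w j / Real.sqrt (j.1 + 1)
        ≤ ∑ k ∈ Finset.Iic j, w k / Real.sqrt (k.1 + 1) := by
      apply Finset.sum_le_sum
      intro k hk
      have hkj : k ≤ j := Finset.mem_Iic.mp hk
      exact div_le_div₀ (hnn k) (hmono k j hkj) (Real.sqrt_pos.2 (by positivity))
        (Real.sqrt_le_sqrt (by exact_mod_cast Nat.succ_le_succ hkj))
    have h2 : ∑ k ∈ Finset.Iic j, w k / Real.sqrt (k.1 + 1) ≤ S := by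
      rw [hS]
      apply Finset.sum_le_sum_of_subset_of_nonneg (Finset.subset_univ _)
      intro k _ _
      exact div_nonneg (hnn k) (Real.sqrt_nonneg _)
    have h3 : ∑ _k ∈ Finset.Iic j, w j / Real.sqrt (j.1 + 1)
        = Real.sqrt (j.1 + 1) * w j := by
      rw [Finset.sum_const, hcard, nsmul_eq_mul]
      have hne : Real.sqrt (j.1 + 1) ≠ 0 := ne_of_gt (Real.sqrt_pos.2 (by positivity))
      have hsq : Real.sqrt (j.1 + 1) * Real.sqrt (j.1 + 1) = (j.1 : ℝ) + 1 :=
        Real.mul_self_sqrt (by positivity)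
      push_cast
      field_simp
      linear_combination (-(w j)) * hsq
    linarith [h1, h2]
  -- consequence : √Q ≤ S
  have keyB : Real.sqrt Q ≤ S := by
    have hQS : Q ≤ S ^ 2 := by
      have h : Q ≤ ∑ j : Fin d, (S / Real.sqrt (j.1 + 1)) * w j := by
        rw [hQ]
        apply Finset.sum_le_sum
        intro j _
        have hsq : 0 < Real.sqrt (j.1 + 1) := Real.sqrt_pos.2 (by positivity)
        have hwj : w j ≤ S / Real.sqrt (j.1 + 1) := by
          rw [le_div_iff₀ hsq]
          have := keyA j
          linarith [keyA j]
        have := mul_le_mul_of_nonneg_right hwj (hnn j)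
        nlinarith [this]
      have heq : ∑ j : Fin d, (S / Real.sqrt (j.1 + 1)) * w j = S * S := by
        rw [Finset.mul_sum]
        apply Finset.sum_congr rfl
        intro j _
        ring
      nlinarith [h, heq]
    calc Real.sqrt Q ≤ Real.sqrt (S ^ 2) := Real.sqrt_le_sqrt hQS
      _ = S := Real.sqrt_sq hSnn
  -- harmonic bound : H ≤ 3 L
  have hHle : H ≤ 3 * L := by
    have h1 : H = (harmonic d : ℝ) := by
      rw [hH, harmonic]
      push_cast
      rw [Fin.sum_univ_eq_sum_range (fun i => 1 / ((i : ℝ) + 1)) d]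
      apply Finset.sum_congr rfl
      intro i _
      rw [one_div]
    have h2 : (harmonic d : ℝ) ≤ 1 + Real.log d := harmonic_le_one_add_log d
    have h3 : Real.log d ≤ L := Real.log_le_log (by linarith) (by linarith)
    linarith
  have hQnn : 0 ≤ Real.sqrt Q := Real.sqrt_nonneg _
  -- rewrite RHS
  have hRHS : ∑ j : Fin d, w j * a j = S / Real.sqrt H := by
    rw [hS, Finset.sum_div]
    apply Finset.sum_congr rfl
    intro j _
    rw [ha]
    ring
  rw [hRHS]
  have hsqrt3 : Real.sqrt 3 ≤ 2 := by
    nlinarith [Real.sq_sqrt (show (0:ℝ) ≤ 3 by norm_num), Real.sqrt_nonneg 3]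
  have hsqrt3pos : 0 < Real.sqrt 3 := Real.sqrt_pos.2 (by norm_num)
  have hsqL : 0 < Real.sqrt L := Real.sqrt_pos.2 hLpos
  have hsqH : 0 < Real.sqrt H := Real.sqrt_pos.2 hHpos
  have hsq3L : 0 < Real.sqrt (3 * L) := Real.sqrt_pos.2 (by linarith)
  calc 1 / 2 * Real.sqrt Q / Real.sqrt L
      ≤ Real.sqrt Q / Real.sqrt (3 * L) := by
        rw [Real.sqrt_mul (by norm_num : (0:ℝ) ≤ 3) L]
        rw [div_le_div_iff₀ hsqL (by positivity)]
        have h12 : Real.sqrt 3 ≤ 2 := hsqrt3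
        nlinarith [mul_nonneg (mul_nonneg (sub_nonneg.2 hsqrt3) hQnn) hsqL.le]
    _ ≤ S / Real.sqrt (3 * L) := by gcongr
    _ ≤ S / Real.sqrt H :=
        div_le_div_of_nonneg_left hSnn hsqH (Real.sqrt_le_sqrt hHle)
end

section
/- Let $G = S_d \ltimes (\mathbb{Z}/2\mathbb{Z})^d$ act on $\mathbb{R}^d$ by permuting coordinates and flipping signs (the hyperoctahedral group, i.e., the group of signed permutation matrices), and let $\mathbf{a}$ be the unit vector in the direction of $(1, 1/\sqrt{2}, \ldots, 1/\sqrt{d})$. Then there is an absolute constant $c > 0$ such that for every $\mathbf{v} \in \mathbb{C}^d$, $\sup_{g \in G} |\langle \mathbf{v}, \rho(g)\mathbf{a} \rangle| \geq c\, |\mathbf{v}| / \sqrt{\log(d+1)}$, where $\rho(g)$ is the signed permutation matrix corresponding to $g$. -/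
open Finset

/-! Take the real or the imaginary part `x` of `v`, whichever carries at least half of `|v|²`.
Choosing signs `ε j = sign (x j)` and a permutation that pairs the largest `|x j|` with the
largest weights `1/√(k+1)` turns `⟨x, ρ(g) (1/√(k+1))_k⟩` into `∑ₖ x*ₖ / √(k+1)` for the
decreasing rearrangement `x*` of `|x|`. Since `x*ₖ² (k+1) ≤ |x|²`, each `x*ₖ²` is at most
`|x| x*ₖ / √(k+1)`, so this sum is at least `|x| ≥ |v|/√2`. Normalising `a` divides by
`√(∑ₖ 1/(k+1)) ≤ √(3 log (d+1))`. -/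

theorem sqrt_sum_sq_le_sum_mul_inv_sqrt_of_antitone {d : ℕ} (w : Fin d → ℝ) (hw : ∀ k, 0 ≤ w k)
    (hanti : Antitone w) :
    √(∑ k, w k ^ 2) ≤ ∑ k : Fin d, w k * (1 / √(k.1 + 1)) := by
  set S := ∑ k, w k ^ 2
  have hS : 0 ≤ S := sum_nonneg fun k _ => sq_nonneg _
  have head_le : ∀ k : Fin d, w k * √(k.1 + 1) ≤ √S := by
    intro k
    have : w k ^ 2 * (k.1 + 1) ≤ S :=
      calc w k ^ 2 * ((k.1 : ℝ) + 1) = ∑ _i ∈ Iic k, w k ^ 2 := by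
            rw [sum_const, Fin.card_Iic, nsmul_eq_mul]; push_cast; ring
        _ ≤ ∑ i ∈ Iic k, w i ^ 2 :=
            sum_le_sum fun i hi => pow_le_pow_left₀ (hw k) (hanti (mem_Iic.mp hi)) 2
        _ ≤ S := sum_le_sum_of_subset_of_nonneg (subset_univ _) fun i _ _ => sq_nonneg _
    simpa [Real.sqrt_mul (sq_nonneg _), Real.sqrt_sq (hw k)] using Real.sqrt_le_sqrt this
  have : S ≤ √S * ∑ k : Fin d, w k * (1 / √(k.1 + 1)) := by
    rw [mul_sum]
    refine sum_le_sum fun k _ => ?_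
    have hk : 0 < √((k.1 : ℝ) + 1) := by positivity
    calc w k ^ 2 = (w k * √(k.1 + 1)) * (w k * (1 / √(k.1 + 1))) := by field_simp
      _ ≤ √S * (w k * (1 / √(k.1 + 1))) := by
          gcongr
          · exact mul_nonneg (hw k) (by positivity)
          · exact head_le k
  rcases hS.eq_or_lt with h0 | hpos
  · rw [← h0, Real.sqrt_zero]
    exact sum_nonneg fun k _ => mul_nonneg (hw k) (by positivity)
  · have hs : 0 < √S := Real.sqrt_pos.mpr hpos
    nlinarith [Real.mul_self_sqrt hS]

theorem exists_perm_sign_sqrt_sum_sq_le {d : ℕ} (x : Fin d → ℝ) :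
    ∃ (σ : Equiv.Perm (Fin d)) (ε : Fin d → ℝ), (∀ j, ε j = 1 ∨ ε j = -1) ∧
      √(∑ j, x j ^ 2) ≤ ∑ j, x j * (ε j * (1 / √((σ.symm j).1 + 1))) := by
  set σ := Tuple.sort (fun j => -|x j|)
  have hanti : Antitone (fun k => |x (σ k)|) := fun i j hij => by
    simpa using Tuple.monotone_sort (fun j => -|x j|) hij
  refine ⟨σ, fun j => if 0 ≤ x j then 1 else -1, fun j => by dsimp only; split_ifs <;> simp, ?_⟩
  have hsign : ∀ j, x j * (if 0 ≤ x j then 1 else -1) = |x j| := fun j => by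
    split_ifs with h
    · simp [abs_of_nonneg h]
    · simp [abs_of_neg (not_le.mp h)]
  calc √(∑ j, x j ^ 2) = √(∑ k, |x (σ k)| ^ 2) := by
        simp only [sq_abs]; rw [Equiv.sum_comp σ (fun j => x j ^ 2)]
    _ ≤ ∑ k : Fin d, |x (σ k)| * (1 / √(k.1 + 1)) :=
        sqrt_sum_sq_le_sum_mul_inv_sqrt_of_antitone _ (fun k => abs_nonneg _) hanti
    _ = ∑ j, |x j| * (1 / √((σ.symm j).1 + 1)) := by
        rw [← Equiv.sum_comp σ (fun j => |x j| * (1 / √((σ.symm j).1 + 1)))]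
        simp only [Equiv.symm_apply_apply]
    _ = _ := by simp only [← mul_assoc, hsign]

theorem re_sum_conj_mul_ofReal {ι : Type*} (s : Finset ι) (v : ι → ℂ) (r : ι → ℝ) :
    (∑ j ∈ s, (starRingEnd ℂ) (v j) * (r j : ℂ)).re = ∑ j ∈ s, (v j).re * r j := by
  simp [Complex.re_sum]

theorem im_sum_conj_mul_ofReal {ι : Type*} (s : Finset ι) (v : ι → ℂ) (r : ι → ℝ) :
    (∑ j ∈ s, (starRingEnd ℂ) (v j) * (r j : ℂ)).im = -∑ j ∈ s, (v j).im * r j := by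
  simp [Complex.im_sum]

theorem exists_perm_sign_sqrt_sum_norm_sq_le {d : ℕ} (v : Fin d → ℂ) :
    ∃ (σ : Equiv.Perm (Fin d)) (ε : Fin d → ℝ), (∀ j, ε j = 1 ∨ ε j = -1) ∧
      √(∑ j, ‖v j‖ ^ 2) ≤
        √2 * ‖∑ j, (starRingEnd ℂ) (v j) * ((ε j * (1 / √((σ.symm j).1 + 1)) : ℝ) : ℂ)‖ := by
  set Re2 := ∑ j, (v j).re ^ 2
  set Im2 := ∑ j, (v j).im ^ 2
  have hsplit : ∑ j, ‖v j‖ ^ 2 = Re2 + Im2 := by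
    rw [← sum_add_distrib]
    exact sum_congr rfl fun j _ => by rw [Complex.sq_norm, Complex.normSq_apply]; ring
  have sqrt_add_le (a b : ℝ) (hba : b ≤ a) : √(a + b) ≤ √2 * √a := by
    rw [← Real.sqrt_mul zero_le_two]; exact Real.sqrt_le_sqrt (by linarith)
  rw [hsplit]
  rcases le_total Im2 Re2 with h | h
  · obtain ⟨σ, ε, hε, hre⟩ := exists_perm_sign_sqrt_sum_sq_le (fun j => (v j).re)
    refine ⟨σ, ε, hε, (sqrt_add_le _ _ h).trans ?_⟩
    gcongr
    refine hre.trans (le_trans (le_of_eq ?_) (Complex.re_le_norm _))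
    rw [re_sum_conj_mul_ofReal]
  · obtain ⟨σ, ε, hε, him⟩ := exists_perm_sign_sqrt_sum_sq_le (fun j => (v j).im)
    refine ⟨σ, ε, hε, (add_comm Re2 Im2 ▸ sqrt_add_le _ _ h).trans ?_⟩
    gcongr
    refine him.trans (le_trans (le_of_eq ?_) ((neg_le_abs _).trans (Complex.abs_im_le_norm _)))
    rw [im_sum_conj_mul_ofReal, neg_neg]

theorem sum_inv_succ_le_three_mul_log {d : ℕ} (hd : 1 ≤ d) :
    ∑ k : Fin d, 1 / ((k.1 : ℝ) + 1) ≤ 3 * Real.log (d + 1) := by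
  have hharm : ∑ k : Fin d, 1 / ((k.1 : ℝ) + 1) = harmonic d := by
    rw [Fin.sum_univ_eq_sum_range (fun k => 1 / ((k : ℝ) + 1)) d, harmonic]
    push_cast
    simp [one_div]
  have hd' : (1 : ℝ) ≤ d := by exact_mod_cast hd
  have h2 : Real.log 2 ≤ Real.log (d + 1) := Real.log_le_log (by norm_num) (by linarith)
  have hlog : Real.log d ≤ Real.log (d + 1) := Real.log_le_log (by linarith) (by linarith)
  linarith [harmonic_le_one_add_log d, Real.log_two_gt_d9]

/-- For the hyperoctahedral group acting on `ℂ^d` by signed permutations and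
`a` the unit vector in the direction of `(1, 1/√2, …, 1/√d)`, every `v ∈ ℂ^d` satisfies
`sup_g |⟨v, ρ(g) a⟩| ≥ c |v| / √(log (d+1))`.  A group element is recorded as a pair
`(σ, ε)` of a permutation and a choice of signs, and `ρ(σ,ε) a = (ε j • a (σ⁻¹ j))_j`. -/
theorem stmt1 :
    ∃ c : ℝ, 0 < c ∧ ∀ (d : ℕ), 1 ≤ d →
      ∀ v : Fin d → ℂ,
        let a : Fin d → ℝ := fun j =>
          (1 / Real.sqrt (j.1 + 1)) / Real.sqrt (∑ k : Fin d, 1 / ((k.1 : ℝ) + 1))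
        ∃ (σ : Equiv.Perm (Fin d)) (ε : Fin d → ℝ), (∀ j, ε j = 1 ∨ ε j = -1) ∧
          c * Real.sqrt (∑ j, ‖v j‖ ^ 2) / Real.sqrt (Real.log (d + 1)) ≤
            ‖∑ j, (starRingEnd ℂ) (v j) * ((ε j * a (σ.symm j) : ℝ) : ℂ)‖ := by
  refine ⟨1 / √6, by positivity, fun d hd v => ?_⟩
  intro a
  obtain ⟨σ, ε, hε, hv⟩ := exists_perm_sign_sqrt_sum_norm_sq_le v
  refine ⟨σ, ε, hε, ?_⟩
  set H := ∑ k : Fin d, 1 / ((k.1 : ℝ) + 1)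
  set N := ‖∑ j, (starRingEnd ℂ) (v j) * ((ε j * (1 / √((σ.symm j).1 + 1)) : ℝ) : ℂ)‖
  have hH : 0 < H := sum_pos (fun k _ => by positivity) (univ_nonempty_iff.mpr ⟨⟨0, hd⟩⟩)
  have hL : 0 < Real.log (d + 1) := Real.log_pos (by norm_cast; omega)
  have hscale : ∑ j, (starRingEnd ℂ) (v j) * ((ε j * a (σ.symm j) : ℝ) : ℂ) =
      (∑ j, (starRingEnd ℂ) (v j) * ((ε j * (1 / √((σ.symm j).1 + 1)) : ℝ) : ℂ)) *
        ((√H)⁻¹ : ℝ) := by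
    rw [sum_mul]
    refine sum_congr rfl fun j _ => ?_
    simp only [a, H]
    push_cast
    ring
  rw [hscale, norm_mul, Complex.norm_real, Real.norm_of_nonneg (by positivity), ← div_eq_mul_inv]
  calc 1 / √6 * √(∑ j, ‖v j‖ ^ 2) / √(Real.log (d + 1))
      ≤ 1 / √6 * (√2 * N) / √(Real.log (d + 1)) := by gcongr
    _ = N / √(3 * Real.log (d + 1)) := by
        rw [show (6 : ℝ) = 2 * 3 by norm_num, Real.sqrt_mul zero_le_two,
          Real.sqrt_mul zero_le_three]
        field_simp
    _ ≤ N / √H := by gcongr; exact sum_inv_succ_le_three_mul_log hd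
end

section
/- Let $\Sigma = -\mathbf{a}\mathbf{a}^\intercal/(2d)$ for a unit vector $\mathbf{a} \in \mathbb{R}^d$, let $\Sigma'$ be a real symmetric $d \times d$ matrix, and let $\mathbf{b}$ be a real unit eigenvector of $\Sigma'$ corresponding to its smallest eigenvalue. Then $(1 - (\mathbf{a} \cdot \mathbf{b})^2)^{1/2} \leq 4d \, \|\Sigma' - \Sigma\|_{\mathrm{op}}$, and consequently, after possibly replacing $\mathbf{b}$ by $-\mathbf{b}$, one has $|\mathbf{a} - \mathbf{b}|^2 \leq 32 d^2 \|\Sigma' - \Sigma\|_{\mathrm{op}}^2$ (assuming $16 d^2 \|\Sigma' - \Sigma\|_{\mathrm{op}}^2 \leq 1$). -/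
/-!
Write `E = Σ' - Σ` with `Σ = -c aaᵀ` and `ε = ‖E‖`, and `t = ⟪a, b⟫`. Testing the minimality of `μ`
on `a` gives `μ ≤ ⟪a, Σ' a⟫ ≤ ε - c`. Testing `E b = μ b + c t a` against `w = b - t a`, which is
orthogonal to `a` and has `‖w‖² = ⟪w, b⟫ = 1 - t²`, gives `-μ (1 - t²) ≤ ε √(1 - t²)`. Together,
`(c - ε) s² ≤ ε s` for `s = √(1 - t²) ≤ 1`, hence `c s ≤ 2ε`; for `c = 1/(2d)` this is `s ≤ 4dε`.
The second bound follows from `min ‖a - b‖² ‖a + b‖² = 2 - 2|t| ≤ 2(1 - t²)`.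
-/

open Finset Matrix

/-- The ℓ²→ℓ² operator (spectral) norm of a real square matrix. -/
noncomputable def matrixOpNorm {d : ℕ} (M : Matrix (Fin d) (Fin d) ℝ) : ℝ :=
  ‖LinearMap.toContinuousLinearMap (Matrix.toEuclideanLin M)‖

open WithLp
open scoped RealInnerProductSpace

section RankOnePerturbation

variable {V : Type*} [NormedAddCommGroup V] [InnerProductSpace ℝ V]
  {T : V →ₗ[ℝ] V} {a b : V} {c μ ε : ℝ}

theorem real_inner_sq_le_one_of_norm_eq_one (ha : ‖a‖ = 1) (hb : ‖b‖ = 1) : ⟪a, b⟫ ^ 2 ≤ 1 :=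
  sq_le_one_iff_abs_le_one _ |>.2 <| abs_le.2
    ⟨neg_one_le_real_inner_of_norm_eq_one ha hb, real_inner_le_one_of_norm_eq_one ha hb⟩

theorem min_norm_sub_sq_norm_add_sq_le (ha : ‖a‖ = 1) (hb : ‖b‖ = 1) :
    min (‖a - b‖ ^ 2) (‖a + b‖ ^ 2) ≤ 2 * (1 - ⟪a, b⟫ ^ 2) := by
  have ht : |⟪a, b⟫| ≤ 1 := by simpa [ha, hb] using abs_real_inner_le_norm a b
  rw [norm_sub_sq_real, norm_add_sq_real, ha, hb]
  rcases le_total 0 ⟪a, b⟫ with h | h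
  · refine (min_le_left _ _).trans ?_
    rw [abs_of_nonneg h] at ht
    nlinarith
  · refine (min_le_right _ _).trans ?_
    rw [abs_of_nonpos h] at ht
    nlinarith

/- `hT` encodes `‖T - Σ‖ ≤ ε` for the rank-one operator `Σ v = -c ⟪a, v⟫ a`. -/

theorem le_sub_of_norm_add_rankOne_le (ha : ‖a‖ = 1)
    (hT : ∀ v, ‖T v + (c * ⟪a, v⟫) • a‖ ≤ ε * ‖v‖)
    (hmin : ∀ v, μ * ‖v‖ ^ 2 ≤ ⟪v, T v⟫) : μ ≤ ε - c := by
  have haa : ⟪a, a⟫ = 1 := inner_self_eq_one_of_norm_eq_one ha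
  have hE : ⟪a, T a + c • a⟫ ≤ ε := by
    simpa [haa, ha] using (real_inner_le_norm a _).trans (by simpa [haa, ha] using hT a)
  have hμ := hmin a
  rw [inner_add_right, inner_smul_right, haa] at hE
  rw [ha] at hμ
  linarith

theorem neg_mul_one_sub_inner_sq_le (ha : ‖a‖ = 1) (hb : ‖b‖ = 1)
    (hT : ∀ v, ‖T v + (c * ⟪a, v⟫) • a‖ ≤ ε * ‖v‖) (hTb : T b = μ • b) :
    -μ * (1 - ⟪a, b⟫ ^ 2) ≤ ε * √(1 - ⟪a, b⟫ ^ 2) := by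
  set t := ⟪a, b⟫
  set w := b - t • a
  have hwa : ⟪w, a⟫ = 0 := by
    simp [w, inner_sub_left, inner_smul_left, ha, t, real_inner_comm]
  have hwb : ⟪w, b⟫ = 1 - t ^ 2 := by
    simp [w, inner_sub_left, inner_smul_left, hb, t]
    ring
  have hw : ‖w‖ = √(1 - t ^ 2) := by
    have hw2 : ‖w‖ ^ 2 = 1 - t ^ 2 := by
      rw [← real_inner_self_eq_norm_sq, ← hwb]
      nth_rewrite 2 [show w = b - t • a from rfl]
      rw [inner_sub_right, inner_smul_right, hwa, mul_zero, sub_zero]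
    rw [← hw2, Real.sqrt_sq (norm_nonneg w)]
  have hwEb : ⟪w, T b + (c * t) • a⟫ = μ * (1 - t ^ 2) := by
    rw [inner_add_right, inner_smul_right, hwa, hTb, inner_smul_right, hwb]
    ring
  have hcs := (abs_real_inner_le_norm w (T b + (c * t) • a)).trans
    (mul_le_mul_of_nonneg_left (hT b) (norm_nonneg w))
  rw [hwEb, hb, hw] at hcs
  nlinarith [neg_abs_le (μ * (1 - t ^ 2))]

theorem mul_sqrt_one_sub_inner_sq_le (ha : ‖a‖ = 1) (hb : ‖b‖ = 1)
    (hT : ∀ v, ‖T v + (c * ⟪a, v⟫) • a‖ ≤ ε * ‖v‖) (hTb : T b = μ • b)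
    (hmin : ∀ v, μ * ‖v‖ ^ 2 ≤ ⟪v, T v⟫) : c * √(1 - ⟪a, b⟫ ^ 2) ≤ 2 * ε := by
  have hε : 0 ≤ ε := by simpa [ha] using (norm_nonneg _).trans (hT a)
  have ht := real_inner_sq_le_one_of_norm_eq_one ha hb
  have hμ := le_sub_of_norm_add_rankOne_le ha hT hmin
  have hw := neg_mul_one_sub_inner_sq_le ha hb hT hTb
  set s := √(1 - ⟪a, b⟫ ^ 2)
  have hs2 : s ^ 2 = 1 - ⟪a, b⟫ ^ 2 := Real.sq_sqrt (by linarith)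
  have hs0 : 0 ≤ s := Real.sqrt_nonneg _
  have hs1 : s ≤ 1 := Real.sqrt_le_one.mpr (by linarith [sq_nonneg ⟪a, b⟫])
  rw [← hs2] at hw
  have key : s * (c * s) ≤ s * (2 * ε) := by
    nlinarith [mul_le_mul_of_nonneg_right hμ (sq_nonneg s),
      mul_nonneg hε (mul_nonneg hs0 (sub_nonneg.2 hs1))]
  rcases hs0.eq_or_lt with hs | hs
  · rw [← hs]
    linarith
  · exact le_of_mul_le_mul_left key hs

end RankOnePerturbation

section EuclideanSpace

variable {ι : Type*} [Fintype ι]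

theorem EuclideanSpace.norm_toLp_sq (v : ι → ℝ) : ‖toLp 2 v‖ ^ 2 = ∑ i, v i ^ 2 :=
  EuclideanSpace.real_norm_sq_eq _

theorem EuclideanSpace.norm_toLp_eq_one {v : ι → ℝ} (hv : ∑ i, v i ^ 2 = 1) : ‖toLp 2 v‖ = 1 :=
  (pow_eq_one_iff_of_nonneg (norm_nonneg _) two_ne_zero).1 (by rw [norm_toLp_sq, hv])

theorem EuclideanSpace.real_inner_toLp_toLp (v w : ι → ℝ) :
    ⟪toLp 2 v, toLp 2 w⟫ = ∑ i, v i * w i := by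
  simp [EuclideanSpace.inner_toLp_toLp, dotProduct, mul_comm]

theorem Matrix.toEuclideanLin_vecMulVec_self [DecidableEq ι] (a : ι → ℝ) (x : EuclideanSpace ℝ ι) :
    toEuclideanLin (vecMulVec a a) x = ⟪toLp 2 a, x⟫ • toLp 2 a := by
  ext i
  simp [toLpLin_apply, vecMulVec, mulVec, dotProduct, EuclideanSpace.inner_eq_star_dotProduct]
  rw [Finset.sum_mul]
  exact Finset.sum_congr rfl fun j _ => by ring

theorem min_sum_sub_sq_sum_add_sq_le {a b : ι → ℝ} (ha : ∑ i, a i ^ 2 = 1)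
    (hb : ∑ i, b i ^ 2 = 1) :
    min (∑ i, (a i - b i) ^ 2) (∑ i, (a i + b i) ^ 2) ≤ 2 * (1 - (∑ i, a i * b i) ^ 2) := by
  rw [← EuclideanSpace.norm_toLp_sq, ← EuclideanSpace.norm_toLp_sq,
    ← EuclideanSpace.real_inner_toLp_toLp]
  exact min_norm_sub_sq_norm_add_sq_le (EuclideanSpace.norm_toLp_eq_one ha)
    (EuclideanSpace.norm_toLp_eq_one hb)

end EuclideanSpace

theorem norm_toEuclideanLin_le_matrixOpNorm {d : ℕ} (M : Matrix (Fin d) (Fin d) ℝ)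
    (x : EuclideanSpace ℝ (Fin d)) : ‖toEuclideanLin M x‖ ≤ matrixOpNorm M * ‖x‖ :=
  (LinearMap.toContinuousLinearMap _).le_opNorm x

theorem mul_sqrt_one_sub_sum_mul_sq_le_matrixOpNorm {d : ℕ} {a b : Fin d → ℝ}
    (ha : ∑ i, a i ^ 2 = 1) (hb : ∑ i, b i ^ 2 = 1) {S' : Matrix (Fin d) (Fin d) ℝ} {μ : ℝ}
    (heig : S' *ᵥ b = μ • b) (hmin : ∀ v, μ * ∑ i, v i ^ 2 ≤ v ⬝ᵥ S' *ᵥ v) (c : ℝ) :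
    c * √(1 - (∑ i, a i * b i) ^ 2) ≤ 2 * matrixOpNorm (S' - -c • vecMulVec a a) := by
  rw [← EuclideanSpace.real_inner_toLp_toLp]
  refine mul_sqrt_one_sub_inner_sq_le (T := toEuclideanLin S') (μ := μ)
    (EuclideanSpace.norm_toLp_eq_one ha) (EuclideanSpace.norm_toLp_eq_one hb) (fun v => ?_)
    (by simp [toLpLin_toLp, heig]) (fun v => ?_)
  · rw [show toEuclideanLin S' v + (c * ⟪toLp 2 a, v⟫) • toLp 2 a =
        toEuclideanLin (S' - -c • vecMulVec a a) v by
      simp [toEuclideanLin_vecMulVec_self, mul_smul]]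
    exact norm_toEuclideanLin_le_matrixOpNorm _ v
  · simpa [EuclideanSpace.real_norm_sq_eq, EuclideanSpace.inner_eq_star_dotProduct,
      dotProduct_comm] using hmin v.ofLp

theorem stmt10_general (d : ℕ) (a : Fin d → ℝ) (ha : ∑ i, a i ^ 2 = 1)
    (S' : Matrix (Fin d) (Fin d) ℝ)
    (b : Fin d → ℝ) (hb : ∑ i, b i ^ 2 = 1) (μ : ℝ)
    (heig : S'.mulVec b = μ • b)
    (hmin : ∀ v : Fin d → ℝ, μ * (∑ i, v i ^ 2) ≤ v ⬝ᵥ S'.mulVec v) :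
    let S : Matrix (Fin d) (Fin d) ℝ := -((2 * (d : ℝ))⁻¹) • Matrix.vecMulVec a a
    Real.sqrt (1 - (∑ i, a i * b i) ^ 2) ≤ 4 * d * matrixOpNorm (S' - S) ∧
      (16 * (d : ℝ) ^ 2 * matrixOpNorm (S' - S) ^ 2 ≤ 1 →
        min (∑ i, (a i - b i) ^ 2) (∑ i, (a i + b i) ^ 2) ≤
          32 * (d : ℝ) ^ 2 * matrixOpNorm (S' - S) ^ 2) := by
  intro S
  have hd : (0 : ℝ) < d := by
    rcases d with _ | d
    · simp at ha
    · positivity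
  have hsin := mul_sqrt_one_sub_sum_mul_sq_le_matrixOpNorm ha hb heig hmin (2 * (d : ℝ))⁻¹
  rw [inv_mul_le_iff₀ (by positivity)] at hsin
  have hsin' : √(1 - (∑ i, a i * b i) ^ 2) ≤ 4 * d * matrixOpNorm (S' - S) := by linarith
  refine ⟨hsin', fun _ => ?_⟩
  calc min (∑ i, (a i - b i) ^ 2) (∑ i, (a i + b i) ^ 2)
      ≤ 2 * (1 - (∑ i, a i * b i) ^ 2) := min_sum_sub_sq_sum_add_sq_le ha hb
    _ ≤ 2 * (4 * d * matrixOpNorm (S' - S)) ^ 2 := by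
      gcongr
      exact (Real.sqrt_le_iff.1 hsin').2
    _ = 32 * (d : ℝ) ^ 2 * matrixOpNorm (S' - S) ^ 2 := by ring

/-- a Davis–Kahan-type bound.  With `Σ = -aaᵀ/(2d)` and `b` a unit
eigenvector of the smallest eigenvalue of the symmetric matrix `Σ'`, one has
`√(1 - (a·b)²) ≤ 4d ‖Σ' - Σ‖_op`, and (when `16 d² ‖Σ'-Σ‖² ≤ 1`) after possibly
replacing `b` by `-b`, `|a - b|² ≤ 32 d² ‖Σ' - Σ‖_op²`. -/
theorem stmt10 (d : ℕ) (hd : 1 ≤ d) (a : Fin d → ℝ) (ha : ∑ i, a i ^ 2 = 1)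
    (S' : Matrix (Fin d) (Fin d) ℝ) (hS' : S'.IsSymm)
    (b : Fin d → ℝ) (hb : ∑ i, b i ^ 2 = 1) (μ : ℝ)
    (heig : S'.mulVec b = μ • b)
    (hmin : ∀ v : Fin d → ℝ, μ * (∑ i, v i ^ 2) ≤ v ⬝ᵥ S'.mulVec v) :
    let S : Matrix (Fin d) (Fin d) ℝ := -((2 * (d : ℝ))⁻¹) • Matrix.vecMulVec a a
    Real.sqrt (1 - (∑ i, a i * b i) ^ 2) ≤ 4 * d * matrixOpNorm (S' - S) ∧
      (16 * (d : ℝ) ^ 2 * matrixOpNorm (S' - S) ^ 2 ≤ 1 →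
        min (∑ i, (a i - b i) ^ 2) (∑ i, (a i + b i) ^ 2) ≤
          32 * (d : ℝ) ^ 2 * matrixOpNorm (S' - S) ^ 2) :=
  stmt10_general d a ha S' b hb μ heig hmin
end

section
/- Let $G$ be a finite group and $f, x : G \to \mathbb{C}$, with convolution $(f*x)(g) = \mathbb{E}_{h \in G} f(gh^{-1}) x(h)$ and inner product $\langle x, y \rangle = \mathbb{E}_{g \in G} \overline{x(g)} y(g)$. Then for every real $p \geq 1$: $|\langle x, f * x \rangle| \leq \|f\|_{S_p} \, \|x\|_{L^{2p/(p+1)}(G)}^2$, where $\|f\|_{S_p} = (\sum_{\rho \in \widehat{G}} d_\rho \|\widehat{f}(\rho)\|_{S_p}^p)^{1/p}$. -/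
open Finset Matrix
open scoped ComplexOrder

/-- The singular values of a square complex matrix: square roots of the eigenvalues of
`MᴴM`. -/
noncomputable def singularValues {n : Type*} [Fintype n] [DecidableEq n]
    (M : Matrix n n ℂ) : n → ℝ :=
  fun i => Real.sqrt ((Matrix.posSemidef_conjTranspose_mul_self M).1.eigenvalues i)

/-- The Schatten `p`-norm (`p` real, `p ≥ 1`) of a square complex matrix. -/
noncomputable def schattenNorm {n : Type*} [Fintype n] [DecidableEq n]
    (p : ℝ) (M : Matrix n n ℂ) : ℝ :=
  (∑ i, singularValues M i ^ p) ^ (1 / p)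

/-- The matrix of the convolution operator `x ↦ f * x` on `ℂ^G`, with entries
`f(g h⁻¹)/|G|`. -/
noncomputable def convMatrix {G : Type*} [Group G] [Fintype G] [DecidableEq G]
    (f : G → ℂ) : Matrix G G ℂ :=
  Matrix.of fun g h => f (g * h⁻¹) / (Fintype.card G : ℂ)

/-!
Stein interpolation between `p = 1` and `p = ∞`. Write `M = ∑ sᵢ wᵢ vᵢᴴ` for the singular value
decomposition of the convolution matrix and, for `0 ≤ Re z ≤ 1`, put `M_z = ∑ sᵢ^{pz} wᵢ vᵢᴴ` and
`x_z = sgn x · |x|^{q(1+z)/2}` with `q = 2p/(p+1)`, so that `M_{1/p} = M` and `x_{1/p} = x`.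
Averaging `M_z` over right translations does not change `M`, but turns every `M_z` into a
convolution operator. On `Re z = 0`, `M_z` is a contraction and `‖x_z‖₂² = ∑ |x|^q`; on `Re z = 1`,
the entries of the averaged `M_z` are at most `∑ sᵢ^p / |G|` (trace duality against permutation
matrices) and `‖x_z‖₁ = ∑ |x|^q`. The three lines theorem interpolates between the two bounds.
-/

open scoped ComplexConjugate InnerProductSpace

/-- `sgn a · |a| ^ w`, entire in `w`; it is `0` at `a = 0`. -/
noncomputable def phasePow (a w : ℂ) : ℂ := a * Complex.exp ((w - 1) * Real.log ‖a‖)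

lemma phasePow_one (a : ℂ) : phasePow a 1 = a := by simp [phasePow]

@[fun_prop]
lemma differentiable_phasePow (a : ℂ) : Differentiable ℂ (phasePow a) := by
  unfold phasePow; fun_prop

lemma norm_phasePow_le (a w : ℂ) : ‖phasePow a w‖ ≤ ‖a‖ ^ w.re := by
  rcases eq_or_ne a 0 with rfl | ha
  · simp only [phasePow, zero_mul, norm_zero]; positivity
  · have ha' : 0 < ‖a‖ := norm_pos_iff.2 ha
    refine le_of_eq ?_
    rw [Real.rpow_def_of_pos ha']
    simp only [phasePow, norm_mul, Complex.norm_exp, Complex.mul_re, Complex.sub_re,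
      Complex.one_re, Complex.ofReal_re, Complex.ofReal_im, mul_zero, sub_zero]
    nth_rw 1 [← Real.exp_log ha']
    rw [← Real.exp_add]
    ring_nf

lemma norm_toLp_phasePow_sq_le {n : Type*} [Fintype n] (a : n → ℂ) (w : ℂ) :
    ‖(WithLp.toLp 2 fun g => phasePow (a g) w : EuclideanSpace ℂ n)‖ ^ 2
      ≤ ∑ g, ‖a g‖ ^ (2 * w.re) := by
  rw [EuclideanSpace.norm_sq_eq]
  gcongr with g
  calc ‖phasePow (a g) w‖ ^ 2 ≤ (‖a g‖ ^ w.re) ^ 2 := by gcongr; exact norm_phasePow_le _ _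
    _ = ‖a g‖ ^ (2 * w.re) := by
        rw [← Real.rpow_natCast, ← Real.rpow_mul (norm_nonneg _), mul_comm]; norm_num

lemma Real.rpow_le_max_one_rpow {a t T : ℝ} (ha : 0 ≤ a) (ht : 0 ≤ t) (hT : t ≤ T) :
    a ^ t ≤ max 1 a ^ T :=
  calc a ^ t ≤ max 1 a ^ t := by gcongr; exact le_max_right _ _
    _ ≤ max 1 a ^ T := Real.rpow_le_rpow_of_exponent_le (le_max_left _ _) hT

lemma Real.rpow_one_sub_inv_mul_mul_sq_rpow_inv {a b p : ℝ} (ha : 0 ≤ a) (hb : 0 ≤ b) (hp : 0 < p) :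
    a ^ (1 - p⁻¹) * (b * a ^ 2) ^ p⁻¹ = b ^ (1 / p) * a ^ ((p + 1) / p) := by
  rw [Real.mul_rpow hb (sq_nonneg a), ← Real.rpow_natCast, ← Real.rpow_mul ha, mul_left_comm,
    ← Real.rpow_add' ha (ne_of_gt (by push_cast; linarith [inv_pos.2 hp])), one_div]
  congr 2
  push_cast
  field_simp
  ring

lemma EuclideanSpace.norm_toLp_comp_equiv {n : Type*} [Fintype n] (u : n → ℂ) (e : n ≃ n) :
    ‖(WithLp.toLp 2 (u ∘ e) : EuclideanSpace ℂ n)‖ = ‖(WithLp.toLp 2 u : EuclideanSpace ℂ n)‖ := by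
  simp only [EuclideanSpace.norm_eq, Function.comp_apply, Equiv.sum_comp e (fun k => ‖u k‖ ^ 2)]

lemma EuclideanSpace.norm_sum_comp_mul_conj_comp_le {n : Type*} [Fintype n]
    (a b : EuclideanSpace ℂ n) (σ τ : n ≃ n) :
    ‖∑ k, a (σ k) * conj (b (τ k))‖ ≤ ‖a‖ * ‖b‖ :=
  calc _ ≤ ∑ k, ‖a (σ k)‖ * ‖b (τ k)‖ := (norm_sum_le _ _).trans_eq (by simp)
    _ ≤ √(∑ k, ‖a (σ k)‖ ^ 2) * √(∑ k, ‖b (τ k)‖ ^ 2) := Real.sum_mul_le_sqrt_mul_sqrt _ _ _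
    _ = ‖a‖ * ‖b‖ := by
        rw [Equiv.sum_comp σ (fun k => ‖a k‖ ^ 2), Equiv.sum_comp τ (fun k => ‖b k‖ ^ 2),
          EuclideanSpace.norm_eq, EuclideanSpace.norm_eq]

namespace Matrix

lemma norm_dotProduct_mulVec_le {n : Type*} [Fintype n] {A : Matrix n n ℂ} {C : ℝ}
    (hA : ∀ g h, ‖A g h‖ ≤ C) (u v : n → ℂ) :
    ‖u ⬝ᵥ A *ᵥ v‖ ≤ C * (∑ g, ‖u g‖) * ∑ h, ‖v h‖ :=
  calc ‖u ⬝ᵥ A *ᵥ v‖ ≤ ∑ g, ‖u g‖ * ∑ h, ‖A g h‖ * ‖v h‖ := by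
        refine (norm_sum_le _ _).trans (Finset.sum_le_sum fun g _ => ?_)
        rw [norm_mul]
        gcongr
        exact (norm_sum_le _ _).trans_eq (by simp)
    _ ≤ ∑ g, ‖u g‖ * ∑ h, C * ‖v h‖ := by gcongr with g _ h _; exact hA g h
    _ = C * (∑ g, ‖u g‖) * ∑ h, ‖v h‖ := by
        rw [← Finset.mul_sum, ← Finset.sum_mul]
        ring

section SingularValueDecomposition

variable {n : Type*} [Fintype n] [DecidableEq n] (M : Matrix n n ℂ)

noncomputable def rightSingularVectors : OrthonormalBasis n ℂ (EuclideanSpace ℂ n) :=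
  (posSemidef_conjTranspose_mul_self M).1.eigenvectorBasis

/-- `M vᵢ / sᵢ`, which is `0` when `sᵢ = 0` since then `M vᵢ = 0` (and `0⁻¹ = 0`). -/
noncomputable def leftSingularVectors (i : n) : EuclideanSpace ℂ n :=
  ((singularValues M i : ℂ))⁻¹ • WithLp.toLp 2 (M *ᵥ M.rightSingularVectors i)

lemma singularValues_nonneg (i : n) : 0 ≤ singularValues M i := Real.sqrt_nonneg _

lemma singularValues_sq (i : n) :
    singularValues M i ^ 2 = (posSemidef_conjTranspose_mul_self M).1.eigenvalues i :=
  Real.sq_sqrt ((posSemidef_conjTranspose_mul_self M).eigenvalues_nonneg i)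

lemma inner_mulVec_rightSingularVectors (i j : n) :
    ⟪(WithLp.toLp 2 (M *ᵥ M.rightSingularVectors i) : EuclideanSpace ℂ n),
      WithLp.toLp 2 (M *ᵥ M.rightSingularVectors j)⟫_ℂ
      = if i = j then ((singularValues M i ^ 2 : ℝ) : ℂ) else 0 := by
  have hH := (posSemidef_conjTranspose_mul_self M).1
  rw [EuclideanSpace.inner_eq_star_dotProduct, star_mulVec, dotProduct_comm, ← dotProduct_mulVec,
    mulVec_mulVec, rightSingularVectors, hH.mulVec_eigenvectorBasis, dotProduct_smul,
    dotProduct_comm, ← EuclideanSpace.inner_eq_star_dotProduct, OrthonormalBasis.inner_eq_ite]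
  split_ifs with h
  · subst h; simp [singularValues_sq]
  · simp

lemma singularValues_smul_leftSingularVectors (i : n) :
    (singularValues M i : ℂ) • M.leftSingularVectors i
      = WithLp.toLp 2 (M *ᵥ M.rightSingularVectors i) := by
  rcases eq_or_ne (singularValues M i) 0 with h | h
  · have := M.inner_mulVec_rightSingularVectors i i
    rw [if_pos rfl, h] at this
    simp [h, (by simpa using this : M *ᵥ M.rightSingularVectors i = 0)]
  · simp [leftSingularVectors, smul_smul, h]

lemma leftSingularVectors_of_singularValues_eq_zero {i : n} (h : singularValues M i = 0) :
    M.leftSingularVectors i = 0 := by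
  simp [leftSingularVectors, h]

lemma orthonormal_leftSingularVectors :
    Orthonormal ℂ fun i : {i // singularValues M i ≠ 0} => M.leftSingularVectors i := by
  rw [orthonormal_iff_ite]
  rintro ⟨i, hi⟩ ⟨j, hj⟩
  simp only [leftSingularVectors, inner_smul_left, inner_smul_right,
    inner_mulVec_rightSingularVectors, Subtype.mk.injEq]
  split_ifs with h
  · subst h; rw [map_inv₀, Complex.conj_ofReal]; push_cast; field_simp
  · simp

lemma norm_leftSingularVectors_le_one (i : n) : ‖M.leftSingularVectors i‖ ≤ 1 := by
  by_cases h : singularValues M i = 0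
  · simp [M.leftSingularVectors_of_singularValues_eq_zero h]
  · exact ((M.orthonormal_leftSingularVectors).1 ⟨i, h⟩).le

lemma sum_norm_inner_leftSingularVectors_sq_le (x : EuclideanSpace ℂ n) :
    ∑ i, ‖⟪M.leftSingularVectors i, x⟫_ℂ‖ ^ 2 ≤ ‖x‖ ^ 2 := by
  classical
  rw [← Finset.sum_filter_of_ne (p := fun i => singularValues M i ≠ 0) fun i _ hi h => hi (by
      simp [M.leftSingularVectors_of_singularValues_eq_zero h]),
    Finset.sum_subtype (F := inferInstance) (p := fun i => singularValues M i ≠ 0) _ (by simp)]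
  exact (M.orthonormal_leftSingularVectors).sum_inner_products_le x

lemma sum_rightSingularVectors_mul_conj (a b : n) :
    ∑ i, M.rightSingularVectors i a * conj (M.rightSingularVectors i b)
      = (1 : Matrix n n ℂ) a b := by
  rw [← Unitary.coe_mul_star_self (posSemidef_conjTranspose_mul_self M).1.eigenvectorUnitary,
    mul_apply]
  rfl

noncomputable def withSingularValues (e : n → ℂ) : Matrix n n ℂ :=
  ∑ i, e i • vecMulVec (M.leftSingularVectors i) (star (M.rightSingularVectors i))

lemma withSingularValues_apply (e : n → ℂ) (g h : n) :
    M.withSingularValues e g h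
      = ∑ i, e i * (M.leftSingularVectors i g * conj (M.rightSingularVectors i h)) := by
  simp [withSingularValues, Matrix.sum_apply, vecMulVec_apply]

lemma withSingularValues_singularValues :
    M.withSingularValues (fun i => singularValues M i) = M := by
  ext g h
  have hw (i : n) : (singularValues M i : ℂ) * M.leftSingularVectors i g
      = (M *ᵥ M.rightSingularVectors i) g :=
    congr($(M.singularValues_smul_leftSingularVectors i) g)
  simp only [withSingularValues_apply, ← mul_assoc, hw, mulVec, dotProduct, Finset.sum_mul]
  rw [Finset.sum_comm]
  simp only [mul_assoc, ← Finset.mul_sum, sum_rightSingularVectors_mul_conj]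
  simp [one_apply]

lemma dotProduct_withSingularValues_mulVec (e u v : n → ℂ) :
    u ⬝ᵥ M.withSingularValues e *ᵥ v = ∑ i, e i *
      ⟪(WithLp.toLp 2 (star u) : EuclideanSpace ℂ n), M.leftSingularVectors i⟫_ℂ *
      ⟪M.rightSingularVectors i, WithLp.toLp 2 v⟫_ℂ := by
  simp only [withSingularValues, sum_mulVec, dotProduct_sum, smul_mulVec, vecMulVec_mulVec,
    dotProduct_smul, EuclideanSpace.inner_eq_star_dotProduct, star_star]
  refine Finset.sum_congr rfl fun i _ => ?_
  simp [dotProduct_comm, mul_assoc]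

lemma norm_dotProduct_withSingularValues_mulVec_le {e : n → ℂ} (he : ∀ i, ‖e i‖ ≤ 1)
    (u v : n → ℂ) :
    ‖u ⬝ᵥ M.withSingularValues e *ᵥ v‖ ≤
      ‖(WithLp.toLp 2 u : EuclideanSpace ℂ n)‖ * ‖(WithLp.toLp 2 v : EuclideanSpace ℂ n)‖ := by
  set u' : EuclideanSpace ℂ n := WithLp.toLp 2 (star u)
  set v' : EuclideanSpace ℂ n := WithLp.toLp 2 v
  have hu' : ‖u'‖ = ‖(WithLp.toLp 2 u : EuclideanSpace ℂ n)‖ := by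
    simp [u', EuclideanSpace.norm_eq]
  rw [dotProduct_withSingularValues_mulVec, ← hu']
  calc _ ≤ ∑ i, ‖⟪M.leftSingularVectors i, u'⟫_ℂ‖ * ‖⟪M.rightSingularVectors i, v'⟫_ℂ‖ := by
        refine (norm_sum_le _ _).trans (Finset.sum_le_sum fun i _ => ?_)
        rw [norm_mul, norm_mul, norm_inner_symm]
        gcongr
        exact mul_le_of_le_one_left (norm_nonneg _) (he i)
    _ ≤ √(∑ i, ‖⟪M.leftSingularVectors i, u'⟫_ℂ‖ ^ 2) *
          √(∑ i, ‖⟪M.rightSingularVectors i, v'⟫_ℂ‖ ^ 2) :=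
        Real.sum_mul_le_sqrt_mul_sqrt _ _ _
    _ ≤ ‖u'‖ * ‖v'‖ := by
        rw [OrthonormalBasis.sum_sq_norm_inner_right, Real.sqrt_sq (norm_nonneg _)]
        gcongr
        exact Real.sqrt_le_iff.2 ⟨norm_nonneg _, M.sum_norm_inner_leftSingularVectors_sq_le u'⟩

/-- Trace duality: the sum is `tr (M_e P)` for a permutation matrix `P`. -/
lemma norm_sum_withSingularValues_apply_le (e : n → ℂ) (σ τ : n ≃ n) :
    ‖∑ k, M.withSingularValues e (σ k) (τ k)‖ ≤ ∑ i, ‖e i‖ := by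
  simp only [withSingularValues_apply]
  rw [Finset.sum_comm]
  refine (norm_sum_le _ _).trans (Finset.sum_le_sum fun i _ => ?_)
  rw [← Finset.mul_sum, norm_mul]
  refine mul_le_of_le_one_right (norm_nonneg _) ?_
  refine (EuclideanSpace.norm_sum_comp_mul_conj_comp_le _ _ σ τ).trans ?_
  rw [OrthonormalBasis.norm_eq_one, mul_one]
  exact M.norm_leftSingularVectors_le_one i

noncomputable def singularValuePow (t : ℂ) : Matrix n n ℂ :=
  M.withSingularValues fun i => phasePow (singularValues M i) t

lemma singularValuePow_one : M.singularValuePow 1 = M := by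
  simp only [singularValuePow, phasePow_one, withSingularValues_singularValues]

lemma differentiable_singularValuePow_apply (g h : n) :
    Differentiable ℂ fun t => M.singularValuePow t g h := by
  simp only [singularValuePow, withSingularValues_apply]
  fun_prop

end SingularValueDecomposition

section RightAverage

variable {G : Type*} [Group G] [Fintype G]

noncomputable def rightAverage (A : Matrix G G ℂ) : Matrix G G ℂ :=
  (Fintype.card G : ℂ)⁻¹ • ∑ k, A.submatrix (Equiv.mulRight k) (Equiv.mulRight k)

lemma rightAverage_apply (A : Matrix G G ℂ) (g h : G) :
    A.rightAverage g h = (Fintype.card G : ℂ)⁻¹ * ∑ k, A (g * k) (h * k) := by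
  simp [rightAverage, Matrix.sum_apply]

lemma rightAverage_eq_self {A : Matrix G G ℂ} (hA : ∀ g h k, A (g * k) (h * k) = A g h) :
    A.rightAverage = A := by
  ext g h
  simp [rightAverage_apply, hA]

lemma norm_dotProduct_rightAverage_mulVec_le {A : Matrix G G ℂ}
    (hA : ∀ u v : G → ℂ, ‖u ⬝ᵥ A *ᵥ v‖ ≤
      ‖(WithLp.toLp 2 u : EuclideanSpace ℂ G)‖ * ‖(WithLp.toLp 2 v : EuclideanSpace ℂ G)‖)
    (u v : G → ℂ) :
    ‖u ⬝ᵥ A.rightAverage *ᵥ v‖ ≤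
      ‖(WithLp.toLp 2 u : EuclideanSpace ℂ G)‖ * ‖(WithLp.toLp 2 v : EuclideanSpace ℂ G)‖ := by
  have hN : (0 : ℝ) < Fintype.card G := by exact_mod_cast Fintype.card_pos
  have hk (k : G) : u ⬝ᵥ A.submatrix (Equiv.mulRight k) (Equiv.mulRight k) *ᵥ v
      = (u ∘ (Equiv.mulRight k).symm) ⬝ᵥ A *ᵥ (v ∘ (Equiv.mulRight k).symm) := by
    rw [submatrix_mulVec_equiv, ← comp_equiv_symm_dotProduct]
  rw [rightAverage, smul_mulVec, dotProduct_smul, sum_mulVec, dotProduct_sum, smul_eq_mul,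
    norm_mul, norm_inv, Complex.norm_natCast, inv_mul_le_iff₀ hN]
  calc _ ≤ ∑ k : G, ‖u ⬝ᵥ A.submatrix (Equiv.mulRight k) (Equiv.mulRight k) *ᵥ v‖ :=
        norm_sum_le _ _
    _ ≤ ∑ _k : G, ‖(WithLp.toLp 2 u : EuclideanSpace ℂ G)‖ *
          ‖(WithLp.toLp 2 v : EuclideanSpace ℂ G)‖ := by
        refine Finset.sum_le_sum fun k _ => ?_
        rw [hk, ← EuclideanSpace.norm_toLp_comp_equiv u (Equiv.mulRight k).symm,
          ← EuclideanSpace.norm_toLp_comp_equiv v (Equiv.mulRight k).symm]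
        exact hA _ _
    _ = _ := by simp

lemma norm_rightAverage_withSingularValues_apply_le [DecidableEq G] (M : Matrix G G ℂ)
    (e : G → ℂ) (g h : G) :
    ‖(M.withSingularValues e).rightAverage g h‖ ≤ (Fintype.card G : ℝ)⁻¹ * ∑ i, ‖e i‖ := by
  rw [rightAverage_apply, norm_mul, norm_inv, Complex.norm_natCast]
  gcongr
  exact M.norm_sum_withSingularValues_apply_le e (Equiv.mulLeft g) (Equiv.mulLeft h)

end RightAverage

end Matrix

section SteinInterpolation

variable {G : Type*} [Group G] [Fintype G] [DecidableEq G]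

/-- Stein's analytic family for the form `x ↦ 𝔼 x̄ · A x`, exact at `z = 1/p` when `A`
commutes with right translations. -/
noncomputable def steinInterpolant (A : Matrix G G ℂ) (x : G → ℂ) (p : ℝ) (z : ℂ) : ℂ :=
  (Fintype.card G : ℂ)⁻¹ *
    ((fun g => phasePow (star (x g)) ((p / (p + 1) : ℝ) * (1 + z))) ⬝ᵥ
      (A.singularValuePow (p * z)).rightAverage *ᵥ
        fun h => phasePow (x h) ((p / (p + 1) : ℝ) * (1 + z)))

variable (A : Matrix G G ℂ) (x : G → ℂ) {p : ℝ}

lemma steinInterpolant_inv (hp : 0 < p) :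
    steinInterpolant A x p (p⁻¹ : ℝ) =
      (Fintype.card G : ℂ)⁻¹ * (star x ⬝ᵥ A.rightAverage *ᵥ x) := by
  have hz : (p : ℂ) * ((p⁻¹ : ℝ) : ℂ) = 1 := by push_cast; field_simp
  have hw : ((p / (p + 1) : ℝ) : ℂ) * (1 + ((p⁻¹ : ℝ) : ℂ)) = 1 := by
    have : (p : ℂ) + 1 ≠ 0 := by exact_mod_cast (by linarith : p + 1 ≠ 0)
    push_cast; field_simp
  simp only [steinInterpolant, hz, hw, phasePow_one, Matrix.singularValuePow_one]
  rfl

lemma differentiable_steinInterpolant : Differentiable ℂ (steinInterpolant A x p) := by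
  have := A.differentiable_singularValuePow_apply
  unfold steinInterpolant
  simp only [dotProduct, mulVec, Matrix.rightAverage_apply]
  fun_prop

lemma norm_steinInterpolant_le (z : ℂ) :
    ‖steinInterpolant A x p z‖ ≤ (Fintype.card G : ℝ)⁻¹ *
      ((Fintype.card G : ℝ)⁻¹ * ∑ i, singularValues A i ^ (p * z.re)) *
        (∑ g, ‖x g‖ ^ (p / (p + 1) * (1 + z.re))) ^ 2 := by
  set N := (Fintype.card G : ℝ)
  set e := fun i => phasePow (singularValues A i) (p * z)
  set w : ℂ := (p / (p + 1) : ℝ) * (1 + z)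
  have hw (a : ℂ) : ‖phasePow a w‖ ≤ ‖a‖ ^ (p / (p + 1) * (1 + z.re)) :=
    (norm_phasePow_le _ _).trans_eq (by rw [Complex.re_ofReal_mul]; simp)
  have he (i : G) : ‖e i‖ ≤ singularValues A i ^ (p * z.re) :=
    (norm_phasePow_le _ _).trans_eq (by simp [abs_of_nonneg (singularValues_nonneg A i)])
  have hs : 0 ≤ N⁻¹ * ∑ i, singularValues A i ^ (p * z.re) :=
    mul_nonneg (by positivity)
      (Finset.sum_nonneg fun i _ => Real.rpow_nonneg (singularValues_nonneg A i) _)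
  calc ‖steinInterpolant A x p z‖
      = N⁻¹ * ‖(fun g => phasePow (star (x g)) w) ⬝ᵥ (A.withSingularValues e).rightAverage *ᵥ
          fun h => phasePow (x h) w‖ := by
        rw [steinInterpolant, norm_mul, norm_inv, Complex.norm_natCast]; rfl
    _ ≤ N⁻¹ * ((N⁻¹ * ∑ i, ‖e i‖) * (∑ g, ‖phasePow (star (x g)) w‖) *
          ∑ h, ‖phasePow (x h) w‖) := by
        gcongr
        exact Matrix.norm_dotProduct_mulVec_le
          (fun g h => A.norm_rightAverage_withSingularValues_apply_le e g h) _ _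
    _ ≤ N⁻¹ * ((N⁻¹ * ∑ i, singularValues A i ^ (p * z.re)) *
          (∑ g, ‖x g‖ ^ (p / (p + 1) * (1 + z.re))) * ∑ h, ‖x h‖ ^ (p / (p + 1) * (1 + z.re))) := by
        gcongr with i _ g _ h _
        · exact he i
        · simpa using hw (star (x g))
        · exact hw (x h)
    _ = _ := by ring

lemma norm_steinInterpolant_le_of_re_eq_zero {z : ℂ} (hz : z.re = 0) :
    ‖steinInterpolant A x p z‖ ≤ (∑ g, ‖x g‖ ^ (2 * p / (p + 1))) / Fintype.card G := by
  set w : ℂ := (p / (p + 1) : ℝ) * (1 + z)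
  set y : EuclideanSpace ℂ G := WithLp.toLp 2 fun h => phasePow (x h) w
  set y' : EuclideanSpace ℂ G := WithLp.toLp 2 fun g => phasePow (star (x g)) w
  have hw : 2 * w.re = 2 * p / (p + 1) := by
    rw [Complex.re_ofReal_mul]; simp [hz]; ring
  have hy := norm_toLp_phasePow_sq_le x w
  have hy' := norm_toLp_phasePow_sq_le (star x) w
  simp only [hw, Pi.star_apply, norm_star] at hy hy'
  have he (i : G) : ‖phasePow (singularValues A i) (p * z)‖ ≤ 1 :=
    (norm_phasePow_le _ _).trans_eq (by simp [hz])
  have hB := Matrix.norm_dotProduct_rightAverage_mulVec_le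
    (A.norm_dotProduct_withSingularValues_mulVec_le he) (fun g => phasePow (star (x g)) w)
    (fun h => phasePow (x h) w)
  rw [steinInterpolant, norm_mul, norm_inv, Complex.norm_natCast, inv_mul_eq_div]
  gcongr
  refine hB.trans ?_
  nlinarith [sq_nonneg (‖y'‖ - ‖y‖)]

lemma norm_steinInterpolant_le_of_re_eq_one {z : ℂ} (hz : z.re = 1) :
    ‖steinInterpolant A x p z‖ ≤ (∑ i, singularValues A i ^ p) *
      ((∑ g, ‖x g‖ ^ (2 * p / (p + 1))) / Fintype.card G) ^ 2 := by
  refine (norm_steinInterpolant_le A x z).trans_eq ?_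
  rw [hz, mul_one, show p / (p + 1) * (1 + 1) = 2 * p / (p + 1) by ring]
  ring

lemma bddAbove_steinInterpolant (hp : 0 ≤ p) :
    BddAbove ((norm ∘ steinInterpolant A x p) ''
      Complex.HadamardThreeLines.verticalClosedStrip 0 1) := by
  refine ⟨(Fintype.card G : ℝ)⁻¹ * ((Fintype.card G : ℝ)⁻¹ * ∑ i, max 1 (singularValues A i) ^ p) *
    (∑ g, max 1 ‖x g‖ ^ (2 * p / (p + 1))) ^ 2, ?_⟩
  rintro _ ⟨z, ⟨hz0, hz1⟩, rfl⟩
  refine (norm_steinInterpolant_le A x z).trans ?_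
  gcongr with i _ g _
  · exact Real.rpow_le_max_one_rpow (singularValues_nonneg A i) (by positivity)
      (mul_le_of_le_one_right hp hz1)
  · refine Real.rpow_le_max_one_rpow (norm_nonneg _) (by positivity) ?_
    calc p / (p + 1) * (1 + z.re) ≤ p / (p + 1) * 2 := by gcongr; linarith
      _ = 2 * p / (p + 1) := by ring

end SteinInterpolation

lemma rightAverage_convMatrix {G : Type*} [Group G] [Fintype G] [DecidableEq G] (f : G → ℂ) :
    (convMatrix f).rightAverage = convMatrix f :=
  Matrix.rightAverage_eq_self fun g h k => by simp [convMatrix, mul_assoc]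

lemma star_dotProduct_convMatrix_mulVec {G : Type*} [Group G] [Fintype G] [DecidableEq G]
    (f x : G → ℂ) :
    star x ⬝ᵥ convMatrix f *ᵥ x
      = ∑ g, conj (x g) * ((Fintype.card G : ℂ)⁻¹ * ∑ h, f (g * h⁻¹) * x h) := by
  simp only [dotProduct, mulVec, convMatrix, of_apply, Pi.star_apply, Finset.mul_sum]
  refine Finset.sum_congr rfl fun g _ => Finset.sum_congr rfl fun h _ => ?_
  rw [Complex.star_def]
  ring

/-- For `f, x : G → ℂ` and real `p ≥ 1`,
`|⟨x, f * x⟩| ≤ ‖f‖_{S_p} ‖x‖_{L^{2p/(p+1)}(G)}²`, where `‖f‖_{S_p}` is the Schatten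
`p`-norm of the convolution operator, `⟨x, y⟩ = 𝔼_g conj (x g) * y g`, and
`(f * x)(g) = 𝔼_h f(g h⁻¹) x(h)`. -/
theorem stmt18 (G : Type*) [Group G] [Fintype G] [DecidableEq G] (f x : G → ℂ)
    (p : ℝ) (hp : 1 ≤ p) :
    ‖(Fintype.card G : ℂ)⁻¹ * ∑ g : G, (starRingEnd ℂ) (x g) *
        ((Fintype.card G : ℂ)⁻¹ * ∑ h : G, f (g * h⁻¹) * x h)‖ ≤
      schattenNorm p (convMatrix f) *
        (((∑ g : G, ‖x g‖ ^ (2 * p / (p + 1))) / (Fintype.card G : ℝ)) ^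
          ((p + 1) / p)) := by
  have hp0 : 0 < p := by linarith
  have hz : ((p⁻¹ : ℝ) : ℂ) ∈ Complex.HadamardThreeLines.verticalClosedStrip 0 1 :=
    ⟨by simp only [Complex.ofReal_re]; positivity, by simpa using inv_le_one_of_one_le₀ hp⟩
  have key := Complex.HadamardThreeLines.norm_le_interp_of_mem_verticalClosedStrip₀₁' _ hz
    (differentiable_steinInterpolant (convMatrix f) x).diffContOnCl
    (bddAbove_steinInterpolant (convMatrix f) x hp0.le)
    (fun _ hz => norm_steinInterpolant_le_of_re_eq_zero (convMatrix f) x hz)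
    (fun _ hz => norm_steinInterpolant_le_of_re_eq_one (convMatrix f) x hz)
  rwa [steinInterpolant_inv _ _ hp0, rightAverage_convMatrix, star_dotProduct_convMatrix_mulVec,
    Complex.ofReal_re, Real.rpow_one_sub_inv_mul_mul_sq_rpow_inv (by positivity)
      (Finset.sum_nonneg fun i _ => Real.rpow_nonneg (singularValues_nonneg _ i) p) hp0] at key
end
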